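/- Let Φ: X ⊸ X be a multi-valued function on a complete metric space X whose inverse Φ⁻¹ is compact-valued and contracting with Lipschitz constant λ < 1, and let F⁻ denote the micro-fractal 𝔽(Φ⁻¹) (the unique nonempty compact set with Φ⁻¹(F⁻) = F⁻). Suppose for some k ≥ 1 the number δ = inf{d(x,y) : x ∈ Φᵏ(Fix(Φ)) \ Φ^{k−1}(Fix(Φ)), y ∈ F⁻} is strictly positive. Then for every n ∈ ω, setting Eₙ = {x ∈ X : d(x, F⁻) ≤ δ/λⁿ}, one has Eₙ ∩ (⋃_m Φᵐ(Fix(Φ))) = Eₙ ∩ Φ^{k+n}(Fix(Φ)). -/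

import Mathlib

open Set

/-- Image of a set under a multi-valued function (relation) `Φ ⊆ X × X`. -/
def mImage {X : Type*} (Φ : Set (X × X)) (A : Set X) : Set X := {y | ∃ x ∈ A, (x, y) ∈ Φ}

/-- Iterates `Φⁿ(A)`. -/
def mIter {X : Type*} (Φ : Set (X × X)) : ℕ → Set X → Set X
  | 0, A => A
  | n + 1, A => mImage Φ (mIter Φ n A)

/-- Fixed points of a multi-valued function. -/
def mFix {X : Type*} (Φ : Set (X × X)) : Set X := {x | (x, x) ∈ Φ}

/-- The value `Φ(x)` of a multi-valued function at a point. -/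
def mVal {X : Type*} (Φ : Set (X × X)) (x : X) : Set X := {y | (x, y) ∈ Φ}

/-- The inverse multi-valued function. -/
def mInv {X : Type*} (Φ : Set (X × X)) : Set (X × X) := {p | (p.2, p.1) ∈ Φ}

/-!
Write `d(x) = d(x, F⁻)` and `Eⱼ = Φʲ(Fix Φ)`. Since `Φ⁻¹(F⁻) ⊆ F⁻` and `Φ⁻¹` is a `λ`-contraction
for the Hausdorff distance, `d(y) ≤ λ d(x)` whenever `x ∈ Φ(y)`. So if `x ∈ E_{k+j} \ E_{k+j-1}`,
any `y` with `x ∈ Φ(y)` and `y ∈ E_{k+j-1}` lies in `E_{k+j-1} \ E_{k+j-2}`, and induction on `j`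
gives `δ ≤ λʲ d(x)`. A point of `⋃ Eₘ` with `d(x) ≤ δ/λⁿ` has `λʲ d(x) < δ` for every `j > n`,
so it can be pushed down to `E_{k+n}` one step at a time.
-/

open Metric

theorem pow_add_succ_mul_lt_of_le_div {lam δ d : ℝ} (hlam0 : 0 ≤ lam) (hlam : lam < 1)
    (hδ : 0 < δ) (n i : ℕ) (hd : d ≤ δ / lam ^ n) :
    lam ^ (n + (i + 1)) * d < δ := by
  have hlamn : lam ^ n * (δ / lam ^ n) ≤ δ := by
    rcases eq_or_ne (lam ^ n) 0 with h | h
    · simpa [h] using hδ.le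
    · rw [mul_div_cancel₀ _ h]
  calc lam ^ (n + (i + 1)) * d = lam ^ (i + 1) * (lam ^ n * d) := by ring
    _ ≤ lam ^ (i + 1) * (lam ^ n * (δ / lam ^ n)) := by gcongr
    _ ≤ lam ^ (i + 1) * δ := by gcongr
    _ < 1 * δ := by gcongr; exact pow_lt_one₀ hlam0 hlam (Nat.succ_ne_zero i)
    _ = δ := one_mul δ

section Relation

variable {X : Type*} (Φ : Set (X × X))

theorem mImage_mono {A B : Set X} (h : A ⊆ B) : mImage Φ A ⊆ mImage Φ B :=
  fun _ ⟨x, hx, hxy⟩ => ⟨x, h hx, hxy⟩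

theorem mIter_mono_right {A B : Set X} (h : A ⊆ B) : ∀ n, mIter Φ n A ⊆ mIter Φ n B
  | 0 => h
  | n + 1 => mImage_mono Φ (mIter_mono_right h n)

theorem mIter_succ' (A : Set X) : ∀ n, mIter Φ (n + 1) A = mIter Φ n (mImage Φ A)
  | 0 => rfl
  | n + 1 => congrArg (mImage Φ) (mIter_succ' A n)

theorem mFix_subset_mImage : mFix Φ ⊆ mImage Φ (mFix Φ) :=
  fun x hx => ⟨x, hx, hx⟩

theorem monotone_mIter_mFix : Monotone fun n => mIter Φ n (mFix Φ) :=
  monotone_nat_of_le_succ fun n => by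
    simpa only [mIter_succ'] using mIter_mono_right Φ (mFix_subset_mImage Φ) n

theorem mem_mIter_of_pow_mul_lt {A : Set X} {f : X → ℝ} {lam δ : ℝ} {m : ℕ} (hlam0 : 0 ≤ lam)
    (hf : ∀ x y, (y, x) ∈ Φ → f y ≤ lam * f x)
    (hδ : ∀ x ∈ mIter Φ (m + 1) A \ mIter Φ m A, δ ≤ f x) :
    ∀ (j : ℕ) {x : X}, x ∈ mIter Φ (m + j + 1) A → lam ^ j * f x < δ → x ∈ mIter Φ (m + j) A
  | 0, x, hx, hlt => by
    by_contra hx'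
    have := hδ x ⟨hx, hx'⟩
    rw [pow_zero, one_mul] at hlt
    linarith
  | j + 1, x, ⟨y, hy, hyx⟩, hlt => by
    have hy_lt : lam ^ j * f y < δ :=
      calc lam ^ j * f y ≤ lam ^ j * (lam * f x) :=
            mul_le_mul_of_nonneg_left (hf x y hyx) (pow_nonneg hlam0 j)
        _ = lam ^ (j + 1) * f x := by ring
        _ < δ := hlt
    exact ⟨y, mem_mIter_of_pow_mul_lt hlam0 hf hδ j hy hy_lt, hyx⟩

theorem mem_mIter_of_mem_mIter_add_of_le_div {A : Set X} {f : X → ℝ} {lam δ : ℝ} {m n : ℕ}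
    (hlam0 : 0 ≤ lam) (hlam : lam < 1) (hδpos : 0 < δ)
    (hf : ∀ x y, (y, x) ∈ Φ → f y ≤ lam * f x)
    (hδ : ∀ x ∈ mIter Φ (m + 1) A \ mIter Φ m A, δ ≤ f x) {x : X} (hx : f x ≤ δ / lam ^ n) :
    ∀ t, x ∈ mIter Φ (m + 1 + n + t) A → x ∈ mIter Φ (m + 1 + n) A
  | 0, h => h
  | t + 1, h => by
    rw [show m + 1 + n + (t + 1) = m + (n + (t + 1)) + 1 by ring] at h
    refine mem_mIter_of_mem_mIter_add_of_le_div hlam0 hlam hδpos hf hδ hx t ?_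
    rw [show m + 1 + n + t = m + (n + (t + 1)) by ring]
    exact mem_mIter_of_pow_mul_lt Φ hlam0 hf hδ _ h
      (pow_add_succ_mul_lt_of_le_div hlam0 hlam hδpos n t hx)

end Relation

theorem infDist_le_mul_infDist_of_mem_mVal {X : Type*} [PseudoMetricSpace X] {Ψ : Set (X × X)}
    {F : Set X} {lam : ℝ} (hb : ∀ x, Bornology.IsBounded (mVal Ψ x))
    (hne : ∀ x, (mVal Ψ x).Nonempty)
    (hlip : ∀ x y, hausdorffDist (mVal Ψ x) (mVal Ψ y) ≤ lam * dist x y)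
    (hFc : IsCompact F) (hFne : F.Nonempty) (hF : mImage Ψ F ⊆ F) {x y : X}
    (hy : y ∈ mVal Ψ x) : infDist y F ≤ lam * infDist x F := by
  obtain ⟨z, hz, hxz⟩ := hFc.exists_infDist_eq_dist hFne x
  have hzF : mVal Ψ z ⊆ F := fun w hw => hF ⟨z, hz, hw⟩
  calc infDist y F ≤ infDist y (mVal Ψ z) := infDist_le_infDist_of_subset hzF (hne z)
    _ ≤ hausdorffDist (mVal Ψ x) (mVal Ψ z) :=
        infDist_le_hausdorffDist_of_mem hy
          (hausdorffEDist_ne_top_of_nonempty_of_bounded (hne x) (hne z) (hb x) (hb z))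
    _ ≤ lam * dist x z := hlip x z
    _ = lam * infDist x F := by rw [hxz]

theorem stmt19_general {X : Type*} [MetricSpace X]
    (Φ : Set (X × X)) (lam : ℝ) (hlam0 : 0 ≤ lam) (hlam : lam < 1)
    (hc : ∀ y, IsCompact (mVal (mInv Φ) y)) (hne : ∀ y, (mVal (mInv Φ) y).Nonempty)
    (hlip : ∀ x y, Metric.hausdorffDist (mVal (mInv Φ) x) (mVal (mInv Φ) y) ≤ lam * dist x y)
    (Fm : Set X) (hFc : IsCompact Fm) (hFne : Fm.Nonempty)
    (hFfix : mImage (mInv Φ) Fm = Fm)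
    (k : ℕ) (hk : 1 ≤ k) (δ : ℝ)
    (hδ : δ = sInf {r | ∃ x ∈ mIter Φ k (mFix Φ) \ mIter Φ (k - 1) (mFix Φ),
      ∃ y ∈ Fm, r = dist x y})
    (hδpos : 0 < δ) :
    ∀ n : ℕ,
      {x | Metric.infDist x Fm ≤ δ / lam ^ n} ∩ (⋃ m, mIter Φ m (mFix Φ)) =
      {x | Metric.infDist x Fm ≤ δ / lam ^ n} ∩ mIter Φ (k + n) (mFix Φ) := by
  obtain ⟨m, rfl⟩ : ∃ m, k = m + 1 := Nat.exists_eq_add_of_le' hk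
  rw [Nat.add_sub_cancel] at hδ
  have hcontr : ∀ x y, (y, x) ∈ Φ → infDist y Fm ≤ lam * infDist x Fm := fun _ _ hyx =>
    infDist_le_mul_infDist_of_mem_mVal (fun x => (hc x).isBounded) hne hlip hFc hFne
      hFfix.subset hyx
  have hδ_le : ∀ x ∈ mIter Φ (m + 1) (mFix Φ) \ mIter Φ m (mFix Φ), δ ≤ infDist x Fm := by
    intro x hx
    rw [le_infDist hFne, hδ]
    exact fun y hy => csInf_le ⟨0, by rintro _ ⟨-, -, -, -, rfl⟩; exact dist_nonneg⟩
      ⟨x, hx, y, hy, rfl⟩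
  intro n
  refine Subset.antisymm (fun x ⟨hxd, hx⟩ => ⟨hxd, ?_⟩)
    (inter_subset_inter_right _ (subset_iUnion (fun i => mIter Φ i (mFix Φ)) _))
  obtain ⟨i, hi⟩ := mem_iUnion.1 hx
  exact mem_mIter_of_mem_mIter_add_of_le_div Φ hlam0 hlam hδpos hcontr hδ_le hxd i
    (monotone_mIter_mFix Φ (by omega) hi)

theorem stmt19 {X : Type*} [MetricSpace X] [CompleteSpace X]
    (Φ : Set (X × X)) (lam : ℝ) (hlam0 : 0 ≤ lam) (hlam : lam < 1)
    (hc : ∀ y, IsCompact (mVal (mInv Φ) y)) (hne : ∀ y, (mVal (mInv Φ) y).Nonempty)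
    (hlip : ∀ x y, Metric.hausdorffDist (mVal (mInv Φ) x) (mVal (mInv Φ) y) ≤ lam * dist x y)
    (Fm : Set X) (hFc : IsCompact Fm) (hFne : Fm.Nonempty)
    (hFfix : mImage (mInv Φ) Fm = Fm)
    (hFuniq : ∀ K : Set X, IsCompact K → K.Nonempty → mImage (mInv Φ) K = K → K = Fm)
    (k : ℕ) (hk : 1 ≤ k) (δ : ℝ)
    (hδ : δ = sInf {r | ∃ x ∈ mIter Φ k (mFix Φ) \ mIter Φ (k - 1) (mFix Φ),
      ∃ y ∈ Fm, r = dist x y})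
    (hδpos : 0 < δ) :
    ∀ n : ℕ,
      {x | Metric.infDist x Fm ≤ δ / lam ^ n} ∩ (⋃ m, mIter Φ m (mFix Φ)) =
      {x | Metric.infDist x Fm ≤ δ / lam ^ n} ∩ mIter Φ (k + n) (mFix Φ) :=
  stmt19_general Φ lam hlam0 hlam hc hne hlip Fm hFc hFne hFfix k hk δ hδ hδpos
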